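/- arXiv:2410.20218 — 2 statements merged into one kernel-verified Lean document; each statement's English description precedes it below -/
import Mathlib

section
/- The map ((α,t), W) ↦ (x ↦ R_{α(x)} W(t+x) R_{α(x)}ᵗ + α'(x)·I) defines a group action of the semidirect product A ⋊ ℝ on the set of symmetric locally integrable 2×2 matrix functions W on ℝ, where A is the group of absolutely continuous functions α : ℝ → ℝ (modulo constants in πℤ) under pointwise addition, and ℝ acts on A by shifts (t·α)(x) = α(t+x). In particular ((α,s)(β,t))·W = (α,s)·((β,t)·W) with group law (α,s)(β,t) = (α + s·β, s+t). -/
open Matrix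

theorem stmt15
    (R : ℝ → Matrix (Fin 2) (Fin 2) ℝ)
    (hR : ∀ b : ℝ, R b = !![Real.cos b, -Real.sin b; Real.sin b, Real.cos b])
    (act : (ℝ → ℝ) → (ℝ → ℝ) → ℝ → (ℝ → Matrix (Fin 2) (Fin 2) ℝ) →
      (ℝ → Matrix (Fin 2) (Fin 2) ℝ))
    (hact : ∀ α α' t W x,
      act α α' t W x = R (α x) * W (t + x) * (R (α x))ᵀ
        + α' x • (1 : Matrix (Fin 2) (Fin 2) ℝ)) :
    -- composition according to the semidirect product law (α,s)(β,t) = (α + s·β, s+t)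
    (∀ (W : ℝ → Matrix (Fin 2) (Fin 2) ℝ) (α α' β β' : ℝ → ℝ) (s t : ℝ),
      act α α' s (act β β' t W)
        = act (fun x => α x + β (s + x)) (fun x => α' x + β' (s + x)) (s + t) W) ∧
    -- the identity element acts trivially
    (∀ W : ℝ → Matrix (Fin 2) (Fin 2) ℝ, act (fun _ => 0) (fun _ => 0) 0 W = W) ∧
    -- the action preserves symmetry
    (∀ (W : ℝ → Matrix (Fin 2) (Fin 2) ℝ) (α α' : ℝ → ℝ) (t : ℝ),
      (∀ x, (W x)ᵀ = W x) → ∀ x, ((act α α' t W) x)ᵀ = (act α α' t W) x) := by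
  have hmul : ∀ a b : ℝ, R a * R b = R (a + b) := by
    intro a b
    rw [hR, hR, hR]
    ext i j
    fin_cases i <;> fin_cases j <;>
      simp [Matrix.mul_apply, Fin.sum_univ_succ, Real.cos_add, Real.sin_add] <;> ring
  have hzero : R 0 = 1 := by
    rw [hR]
    ext i j
    fin_cases i <;> fin_cases j <;> simp
  have horth : ∀ b : ℝ, R b * (R b)ᵀ = 1 := by
    intro b
    have ht : (R b)ᵀ = R (-b) := by
      rw [hR, hR]
      ext i j
      fin_cases i <;> fin_cases j <;> simp
    rw [ht, hmul, add_neg_cancel, hzero]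
  refine ⟨?_, ?_, ?_⟩
  · intro W α α' β β' s t
    funext x
    rw [hact, hact, hact]
    have h1 : t + (s + x) = s + t + x := by ring
    rw [h1]
    set A := R (α x)
    set B := R (β (s + x))
    set M := W (s + t + x)
    have hAB : A * B = R (α x + β (s + x)) := hmul _ _
    have hAAt : A * Aᵀ = 1 := horth _
    calc A * (B * M * Bᵀ + β' (s + x) • (1 : Matrix (Fin 2) (Fin 2) ℝ)) * Aᵀ
          + α' x • (1 : Matrix (Fin 2) (Fin 2) ℝ)
        = (A * B) * M * (A * B)ᵀ + β' (s + x) • (A * Aᵀ)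
          + α' x • (1 : Matrix (Fin 2) (Fin 2) ℝ) := by
          rw [Matrix.transpose_mul]
          rw [mul_add, add_mul]
          rw [Matrix.mul_smul, Matrix.smul_mul, mul_one]
          noncomm_ring
      _ = R (α x + β (s + x)) * M * (R (α x + β (s + x)))ᵀ
          + (α' x + β' (s + x)) • (1 : Matrix (Fin 2) (Fin 2) ℝ) := by
          rw [hAB, hAAt, add_smul]
          abel
  · intro W
    funext x
    rw [hact]
    simp [hzero]
  · intro W α α' t hW x
    rw [hact]
    have h1t : (1 : Matrix (Fin 2) (Fin 2) ℝ)ᵀ = 1 := Matrix.transpose_one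
    rw [Matrix.transpose_add, Matrix.transpose_smul, h1t, Matrix.transpose_mul,
      Matrix.transpose_mul, Matrix.transpose_transpose, hW, Matrix.mul_assoc]
end

section
/- Define sequences B_n(N) for n ≥ 1, N ≥ 0 by B_n(0) = (3/r)^n (for a fixed r > 0) and the recursion (N+1)B_n(N+1) = 3·∑_{d=0}^{N} ∑_{j=1}^{n} B_j(d)B_{n+1−j}(N−d) + 2n·B_{n+1}(N). Then there exist constants C, M > 0 such that B_1(N) ≤ C·M^N for all N ≥ 0. -/
/-!
Majorant method. Induction on `N` shows `B n N ≤ q ^ n * C(n - 1 + N, n - 1) * ((a + b) * q) ^ N`,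
the `t ^ N`-coefficient of `(q / (1 - (a + b) q t)) ^ n`, for the recursion with general weights
`a, b ≥ 0` and `0 ≤ B n 0 ≤ q ^ n`. The inductive step closes because the convolution of the
binomial majorants is again binomial (compare coefficients in
`(1 - X)⁻¹ ^ (i + 1) * (1 - X)⁻¹ ^ (k + 1) = (1 - X)⁻¹ ^ (i + k + 2)`) and
`(N + 1) * C(n + N, n - 1) = n * C(n + N, n)`.
-/

open Finset PowerSeries

theorem Finset.sum_antidiagonal_add_choose_mul_add_choose (a b N : ℕ) :
    ∑ ij ∈ antidiagonal N, (a + ij.1).choose a * (b + ij.2).choose b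
      = (a + b + 1 + N).choose (a + b + 1) := by
  have h := congrArg (fun f : ℤ⟦X⟧ˣ => coeff N f.val) (invOneSubPow_add ℤ (a + 1) (b + 1))
  simp only [Units.val_mul, coeff_mul, show a + 1 + (b + 1) = a + b + 1 + 1 by ring,
    invOneSubPow_val_succ_eq_mk_add_choose, coeff_mk] at h
  exact_mod_cast h.symm

theorem Nat.sum_range_sum_Icc_choose_mul_choose (n N : ℕ) :
    ∑ d ∈ range (N + 1), ∑ j ∈ Icc 1 n,
        (j - 1 + d).choose (j - 1) * (n - j + (N - d)).choose (n - j)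
      = n * (n + N).choose n := by
  rw [sum_comm]
  have hj : ∀ j ∈ Icc 1 n,
      ∑ d ∈ range (N + 1), (j - 1 + d).choose (j - 1) * (n - j + (N - d)).choose (n - j)
        = (n + N).choose n := by
    intro j hj
    obtain ⟨hj1, hjn⟩ := mem_Icc.mp hj
    rw [← Finset.Nat.sum_antidiagonal_eq_sum_range_succ
      (fun i k => (j - 1 + i).choose (j - 1) * (n - j + k).choose (n - j)),
      sum_antidiagonal_add_choose_mul_add_choose]
    congr 1 <;> omega
  rw [sum_congr rfl hj, sum_const, Nat.card_Icc, smul_eq_mul, Nat.add_sub_cancel]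

theorem Nat.succ_mul_add_choose_pred {n : ℕ} (hn : 1 ≤ n) (N : ℕ) :
    (N + 1) * (n + N).choose (n - 1) = n * (n + N).choose n := by
  have h := Nat.choose_succ_right_eq (n + N) (n - 1)
  rw [Nat.sub_add_cancel hn, show n + N - (n - 1) = N + 1 by omega] at h
  rw [mul_comm, ← h, mul_comm]

theorem sum_range_sum_Icc_mul_le {B : ℕ → ℕ → ℝ} {q m : ℝ} {n N : ℕ}
    (hB : ∀ d ≤ N, ∀ j, 1 ≤ j → 0 ≤ B j d ∧ B j d ≤ q ^ j * (j - 1 + d).choose (j - 1) * m ^ d) :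
    ∑ d ∈ range (N + 1), ∑ j ∈ Icc 1 n, B j d * B (n + 1 - j) (N - d)
      ≤ q ^ (n + 1) * m ^ N * (n * (n + N).choose n) := by
  have hterm : ∀ d ∈ range (N + 1), ∀ j ∈ Icc 1 n, B j d * B (n + 1 - j) (N - d) ≤
      q ^ (n + 1) * m ^ N *
        ((j - 1 + d).choose (j - 1) * (n - j + (N - d)).choose (n - j) : ℕ) := by
    intro d hd j hj
    have hdN := mem_range.mp hd
    have hjn := mem_Icc.mp hj
    obtain ⟨h1nonneg, h1⟩ := hB d (by omega) j hjn.1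
    obtain ⟨h2nonneg, h2⟩ := hB (N - d) (by omega) (n + 1 - j) (by omega)
    calc B j d * B (n + 1 - j) (N - d)
        ≤ (q ^ j * (j - 1 + d).choose (j - 1) * m ^ d) *
          (q ^ (n + 1 - j) * (n + 1 - j - 1 + (N - d)).choose (n + 1 - j - 1) * m ^ (N - d)) :=
          mul_le_mul h1 h2 h2nonneg (h1nonneg.trans h1)
      _ = (q ^ j * q ^ (n + 1 - j)) * (m ^ d * m ^ (N - d)) *
          ((j - 1 + d).choose (j - 1) * (n - j + (N - d)).choose (n - j) : ℕ) := by
          rw [show n + 1 - j - 1 = n - j by omega]; push_cast; ring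
      _ = _ := by rw [pow_mul_pow_sub _ (by omega), pow_mul_pow_sub _ (by omega)]
  calc _ ≤ _ := sum_le_sum fun d hd => sum_le_sum fun j hj => hterm d hd j hj
    _ = _ := by
      simp only [← mul_sum, ← Nat.cast_sum, Nat.sum_range_sum_Icc_choose_mul_choose]
      push_cast; ring

def CoeffRecursion (a b : ℝ) (B : ℕ → ℕ → ℝ) : Prop :=
  ∀ n : ℕ, 1 ≤ n → ∀ N : ℕ,
    ((N : ℝ) + 1) * B n (N + 1) =
      a * ∑ d ∈ range (N + 1), ∑ j ∈ Icc 1 n, B j d * B (n + 1 - j) (N - d)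
        + b * (n : ℝ) * B (n + 1) N

namespace CoeffRecursion

variable {a b : ℝ} {B : ℕ → ℕ → ℝ}

theorem nonneg (ha : 0 ≤ a) (hb : 0 ≤ b) (hrec : CoeffRecursion a b B)
    (h0 : ∀ n, 1 ≤ n → 0 ≤ B n 0) : ∀ N n, 1 ≤ n → 0 ≤ B n N := by
  intro N
  induction N using Nat.strong_induction_on with
  | _ N ih =>
  cases N with
  | zero => exact h0
  | succ N =>
  intro n hn
  have hsum : 0 ≤ ∑ d ∈ range (N + 1), ∑ j ∈ Icc 1 n, B j d * B (n + 1 - j) (N - d) := by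
    refine sum_nonneg fun d hd => sum_nonneg fun j hj => ?_
    have hdN := mem_range.mp hd
    have hjn := mem_Icc.mp hj
    exact mul_nonneg (ih d (by omega) j hjn.1) (ih (N - d) (by omega) (n + 1 - j) (by omega))
  have hshift := ih N (by omega) (n + 1) (by omega)
  have hrhs : 0 ≤ ((N : ℝ) + 1) * B n (N + 1) := by rw [hrec n hn N]; positivity
  exact nonneg_of_mul_nonneg_right (by rwa [mul_comm] at hrhs) (by positivity)

theorem le_majorant (ha : 0 ≤ a) (hb : 0 ≤ b) (hrec : CoeffRecursion a b B) {q : ℝ}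
    (h0 : ∀ n, 1 ≤ n → 0 ≤ B n 0) (hq : ∀ n, 1 ≤ n → B n 0 ≤ q ^ n) :
    ∀ N n, 1 ≤ n → B n N ≤ q ^ n * (n - 1 + N).choose (n - 1) * ((a + b) * q) ^ N := by
  have hB := hrec.nonneg ha hb h0
  set m := (a + b) * q
  intro N
  induction N using Nat.strong_induction_on with
  | _ N ih =>
  cases N with
  | zero => intro n hn; simpa using hq n hn
  | succ N =>
  intro n hn
  have hsum := sum_range_sum_Icc_mul_le (n := n) (N := N)
    fun d hd j hj => ⟨hB d j hj, ih d (by omega) j hj⟩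
  have hshift : B (n + 1) N ≤ q ^ (n + 1) * (n + N).choose n * m ^ N := by
    simpa using ih N (by omega) (n + 1) (by omega)
  have hchoose : ((N : ℝ) + 1) * (n + N).choose (n - 1) = n * (n + N).choose n := by
    exact_mod_cast Nat.succ_mul_add_choose_pred hn N
  rw [show n - 1 + (N + 1) = n + N by omega]
  refine le_of_mul_le_mul_left ?_ (by positivity : (0 : ℝ) < N + 1)
  calc ((N : ℝ) + 1) * B n (N + 1)
      ≤ a * (q ^ (n + 1) * m ^ N * (n * (n + N).choose n))
        + b * n * (q ^ (n + 1) * (n + N).choose n * m ^ N) := by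
        rw [hrec n hn N]; gcongr
    _ = (N + 1) * (q ^ n * (n + N).choose (n - 1) * m ^ (N + 1)) := by
        simp only [m]; linear_combination (-(q ^ n * ((a + b) * q) ^ (N + 1))) * hchoose

end CoeffRecursion

theorem stmt19 (r : ℝ) (hr : 0 < r) (B : ℕ → ℕ → ℝ)
    (hB0 : ∀ n : ℕ, 1 ≤ n → B n 0 = (3 / r) ^ n)
    (hrec : ∀ n : ℕ, 1 ≤ n → ∀ N : ℕ,
      ((N : ℝ) + 1) * B n (N + 1) =
        3 * ∑ d ∈ Finset.range (N + 1), ∑ j ∈ Finset.Icc 1 n, B j d * B (n + 1 - j) (N - d)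
          + 2 * (n : ℝ) * B (n + 1) N) :
    ∃ C M : ℝ, 0 < C ∧ 0 < M ∧ ∀ N : ℕ, B 1 N ≤ C * M ^ N := by
  have hbound := CoeffRecursion.le_majorant (by norm_num) (by norm_num) hrec
    (fun n hn => hB0 n hn ▸ by positivity) (fun n hn => (hB0 n hn).le)
  refine ⟨3 / r, (3 + 2) * (3 / r), by positivity, by positivity, fun N => ?_⟩
  simpa using hbound N 1 le_rfl
end
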